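/- Let Γ be a flag simplicial complex with gr_1(Γ) > 4 (so Γ has no induced 4-cycle in the graph-theoretic sense, obtained via homology). Suppose there are vertices u ≠ v, not adjacent, and s distinct common neighbors v_1, …, v_s of u and v with s > dim Γ + 1. Then some pair v_i, v_j (i ≠ j) is non-adjacent, and Γ[{u, v, v_i, v_j}] is a graph-theoretic 4-cycle with H̃_1(Γ[{u, v, v_i, v_j}]; k) ≠ 0, contradicting gr_1(Γ) > 4. Hence any two non-adjacent vertices of Γ have at most dim Γ + 1 common neighbors. -/

import Mathlib

open Finset

/-- An (abstract) simplicial complex on vertex type `V`: a collection of finite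
subsets of `V` (the faces) closed under taking subsets. -/
structure SC (V : Type*) where
  faces : Set (Finset V)
  down_closed : ∀ {F G : Finset V}, F ∈ faces → G ⊆ F → G ∈ faces

namespace SC

variable {V : Type*} [LinearOrder V]

/-- The vertex set of a simplicial complex. -/
def vertexSet (K : SC V) : Set V := {v | {v} ∈ K.faces}

/-- The induced subcomplex `K[W]` on a set `W` of vertices. -/
def restrict (K : SC V) (W : Set V) : SC V where
  faces := {F | F ∈ K.faces ∧ ↑F ⊆ W}
  down_closed := fun hF hGF =>
    ⟨K.down_closed hF.1 hGF, Set.Subset.trans (Finset.coe_subset.mpr hGF) hF.2⟩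

/-- The link `lk_K(F)` of a face `F`: all `G` disjoint from `F` with `F ∪ G ∈ K`. -/
def link (K : SC V) (F : Finset V) : SC V where
  faces := {G | Disjoint F G ∧ F ∪ G ∈ K.faces}
  down_closed := fun hG hHG =>
    ⟨hG.1.mono_right (Finset.le_iff_subset.mpr hHG),
      K.down_closed hG.2 (Finset.union_subset_union_right hHG)⟩

/-- A complex is flag if every set all of whose subsets of cardinality at most 2
are faces is itself a face (equivalently, all minimal non-faces have two vertices). -/
def Flag (K : SC V) : Prop :=
  ∀ F : Finset V, (∀ G ⊆ F, G.card ≤ 2 → G ∈ K.faces) → F ∈ K.faces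

/-- The faces of `K` with exactly `n` vertices (i.e. of dimension `n-1`). -/
def faceSet (K : SC V) (n : ℕ) : Set (Finset V) := {F | F ∈ K.faces ∧ F.card = n}

variable (k : Type*) [Field k]

/-- Simplicial `(n-1)`-chains with coefficients in `k`: formal `k`-linear
combinations of faces with `n` vertices.  (`n = 0` corresponds to the empty face,
used for *reduced* homology.) -/
abbrev Chains (K : SC V) (n : ℕ) := (faceSet K n) →₀ k

/-- The boundary of a single face, with the usual signs determined by the
linear order on the vertices. -/
noncomputable def bdFace (K : SC V) (n : ℕ) (F : faceSet K (n + 1)) : Chains k K n :=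
  ∑ v ∈ (F : Finset V).attach,
    ((-1 : k) ^ (((F : Finset V).filter (fun x => x < (v : V))).card)) •
      Finsupp.single (⟨(F : Finset V).erase v,
        K.down_closed F.2.1 (Finset.erase_subset _ _),
        by rw [Finset.card_erase_of_mem v.2, F.2.2]; rfl⟩ : faceSet K n) 1

/-- The simplicial boundary map. -/
noncomputable def bd (K : SC V) (n : ℕ) : Chains k K (n + 1) →ₗ[k] Chains k K n :=
  Finsupp.lsum k fun F => LinearMap.toSpanSingleton k _ (bdFace k K n F)

/-- The reduced cycles in degree `n - 1` (chains supported on faces with `n` vertices). -/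
noncomputable def cycles (K : SC V) : (n : ℕ) → Submodule k (Chains k K n)
  | 0 => ⊤
  | (m + 1) => LinearMap.ker (bd k K m)

/-- The boundaries in degree `n - 1`. -/
noncomputable def boundaries (K : SC V) (n : ℕ) : Submodule k (Chains k K n) :=
  LinearMap.range (bd k K n)

/-- `HNonzero k K n` says that the reduced simplicial homology `H̃_{n-1}(K; k)`
is nonzero: some reduced cycle on faces with `n` vertices is not a boundary. -/
def HNonzero (K : SC V) (n : ℕ) : Prop := ¬ (cycles k K n ≤ boundaries k K n)

/-- The dimension of the reduced homology `H̃_{n-1}(K; k)` as a `k`-vector space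
(for finite complexes): `dim (cycles) - dim (boundaries ∩ cycles)`. -/
noncomputable def homDim (K : SC V) (n : ℕ) : ℕ :=
  Module.finrank k ↥(cycles k K n) -
    Module.finrank k ↥(boundaries k K n ⊓ cycles k K n)

/-- `girth k K p` is the `(p-1)`-girth `gr_{p-1}(K)` over the field `k`: the least
cardinality of a vertex set `W` such that `H̃_{p-1}(lk_K(F)[W]; k) ≠ 0` for some
face `F` of `K` (including the empty face), or `∞` if there is no such `W`. -/
noncomputable def girth (K : SC V) (p : ℕ) : ℕ∞ :=
  sInf ((fun W : Finset V => (W.card : ℕ∞)) ''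
    {W : Finset V | ∃ F ∈ K.faces, HNonzero k ((K.link F).restrict ↑W) p})

/-- A non-returning walk of length `len` in the directed 1-skeleton of `K`:
consecutive vertices span edges, and no three consecutive vertices return
(`v_i ≠ v_{i+2}`) or span a 2-face of `K`. -/
def IsNRWalk (K : SC V) (len : ℕ) (w : ℕ → V) : Prop :=
  (∀ i < len, w i ≠ w (i + 1) ∧ ({w i, w (i + 1)} : Finset V) ∈ K.faces) ∧
  (∀ i, i + 2 ≤ len → w i ≠ w (i + 2) ∧ ({w i, w (i + 1), w (i + 2)} : Finset V) ∉ K.faces)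

end SC

/-!
If more than `d` common neighbours of `u` and `v` were pairwise adjacent, flagness would make
them a face with more than `d` vertices. So two of them, `a` and `b`, are non-adjacent, and
`u, a, v, b` span an induced square. Its four oriented edges add up to a 1-cycle, and since both
diagonals are missing the induced complex has no triangles, so this cycle is not a boundary:
`H̃₁(K[{u, a, v, b}]) ≠ 0`, which forces `gr₁(K) ≤ 4`.
-/

namespace SC

variable {V : Type*} [LinearOrder V] (k : Type*) [Field k] (K : SC V)

noncomputable def vertexChain (x : V) (hx : {x} ∈ K.faces) : Chains k K 1 :=
  Finsupp.single ⟨{x}, hx, card_singleton x⟩ 1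

noncomputable def orientedEdge (x y : V) (hxy : x ≠ y) (h : {x, y} ∈ K.faces) : Chains k K 2 :=
  (if x < y then 1 else -1) • Finsupp.single ⟨{x, y}, h, card_pair hxy⟩ 1

variable {k K}

theorem bd_single (n : ℕ) (F : faceSet K (n + 1)) :
    bd k K n (Finsupp.single F 1) = bdFace k K n F := by
  simp [bd]

theorem bd_single_pair {x y : V} (hxy : x < y) (h : {x, y} ∈ K.faces)
    (hx : {x} ∈ K.faces) (hy : {y} ∈ K.faces) :
    bd k K 1 (Finsupp.single ⟨{x, y}, h, card_pair hxy.ne⟩ 1) =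
      vertexChain k K y hy - vertexChain k K x hx := by
  have hattach : ({x, y} : Finset V).attach = {⟨x, by simp⟩, ⟨y, by simp⟩} := by
    ext ⟨z, hz⟩
    simpa only [mem_attach, true_iff, mem_insert, mem_singleton, Subtype.mk.injEq] using hz
  rw [bd_single, bdFace, hattach, sum_pair (by simpa using hxy.ne)]
  simp only [vertexChain, filter_insert, filter_singleton, hxy, not_lt_of_gt hxy, lt_irrefl,
    if_true, if_false, insert_empty, card_empty, card_singleton, pow_zero, pow_one, one_smul,
    neg_one_smul, sub_eq_add_neg]
  congr 3
  · simp [hxy.ne]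
  · exact Subtype.ext
      (show ({x, y} : Finset V).erase y = {x} by simp [erase_insert_of_ne hxy.ne])

theorem bd_orientedEdge {x y : V} (hxy : x ≠ y) (h : {x, y} ∈ K.faces) :
    bd k K 1 (orientedEdge k K x y hxy h) =
      vertexChain k K y (K.down_closed h (by simp)) -
        vertexChain k K x (K.down_closed h (by simp)) := by
  rcases hxy.lt_or_gt with hlt | hgt
  · simp only [orientedEdge, if_pos hlt, one_smul]
    exact bd_single_pair hlt h _ _
  · have h' : {y, x} ∈ K.faces := pair_comm x y ▸ h
    have : (⟨{x, y}, h, card_pair hxy⟩ : faceSet K 2) = ⟨{y, x}, h', card_pair hgt.ne⟩ :=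
      Subtype.ext (pair_comm x y)
    simp only [orientedEdge, if_neg (not_lt_of_gt hgt), this, neg_smul, one_smul, map_neg]
    rw [bd_single_pair hgt h' (K.down_closed h' (by simp)) (K.down_closed h' (by simp)), neg_sub]

theorem orientedEdge_apply {x y : V} (hxy : x ≠ y) (h : {x, y} ∈ K.faces) (F : faceSet K 2) :
    orientedEdge k K x y hxy h F =
      if (F : Finset V) = {x, y} then (if x < y then 1 else -1) else 0 := by
  rw [orientedEdge, Finsupp.smul_apply, Finsupp.single_apply]
  split_ifs with h₁ h₂ <;> simp_all [Subtype.ext_iff, eq_comm]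

theorem boundaries_eq_bot {n : ℕ} (h : ∀ F, F ∉ faceSet K (n + 1)) :
    boundaries k K n = ⊥ := by
  have : IsEmpty (faceSet K (n + 1)) := ⟨fun F => h F F.2⟩
  exact LinearMap.range_eq_bot.mpr (Subsingleton.elim _ _)

theorem hNonzero_of_mem_cycles {n : ℕ} (h : ∀ F, F ∉ faceSet K (n + 1)) {c : Chains k K n}
    (hc : c ∈ cycles k K n) (hc0 : c ≠ 0) : HNonzero k K n := by
  intro hle
  have hc_bd := hle hc
  rw [boundaries_eq_bot h, Submodule.mem_bot] at hc_bd
  exact hc0 hc_bd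

theorem card_inter_pair_le_one {G : Finset V} (hG : G ∈ K.faces) {u v : V}
    (huv : {u, v} ∉ K.faces) : (G ∩ {u, v}).card ≤ 1 := by
  refine card_le_one.mpr fun x hx y hy => ?_
  by_contra hxy
  refine huv (K.down_closed hG fun z hz => ?_)
  simp only [mem_inter, mem_insert, mem_singleton] at hx hy hz
  grind

theorem card_le_two_of_subset_square {G : Finset V} (hG : G ∈ K.faces) {u a v b : V}
    (hGW : G ⊆ {u, a, v, b}) (huv : {u, v} ∉ K.faces) (hab : {a, b} ∉ K.faces) :
    G.card ≤ 2 :=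
  calc G.card = (G ∩ {u, v} ∪ G ∩ {a, b}).card := by
        rw [← inter_union_distrib_left, inter_eq_left.mpr]
        exact hGW.trans fun z => by simp only [mem_insert, mem_union, mem_singleton]; tauto
    _ ≤ (G ∩ {u, v}).card + (G ∩ {a, b}).card := card_union_le _ _
    _ ≤ 2 := add_le_add (card_inter_pair_le_one hG huv) (card_inter_pair_le_one hG hab)

theorem hNonzero_two_of_square (hK : ∀ F, F ∉ faceSet K 3) {u a v b : V}
    (ne_uv : u ≠ v) (ne_ab : a ≠ b) (ne_ua : u ≠ a) (ne_av : a ≠ v) (ne_vb : v ≠ b)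
    (ne_bu : b ≠ u)
    (hua : {u, a} ∈ K.faces) (hav : {a, v} ∈ K.faces) (hvb : {v, b} ∈ K.faces)
    (hbu : {b, u} ∈ K.faces) : HNonzero k K 2 := by
  let c := orientedEdge k K u a ne_ua hua + orientedEdge k K a v ne_av hav +
    orientedEdge k K v b ne_vb hvb + orientedEdge k K b u ne_bu hbu
  refine hNonzero_of_mem_cycles (c := c) hK ?_ fun hc => ?_
  · show bd k K 1 c = 0
    simp only [c, map_add, bd_orientedEdge]
    abel
  have hv : v ∉ ({u, a} : Finset V) := by simp [ne_uv.symm, ne_av.symm]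
  have hb : b ∉ ({u, a} : Finset V) := by simp [ne_bu, ne_ab.symm]
  have h1 : ({u, a} : Finset V) ≠ {a, v} := fun h => hv (h ▸ by simp)
  have h2 : ({u, a} : Finset V) ≠ {v, b} := fun h => hv (h ▸ by simp)
  have h3 : ({u, a} : Finset V) ≠ {b, u} := fun h => hb (h ▸ by simp)
  have hc_ua := DFunLike.congr_fun hc ⟨{u, a}, hua, card_pair ne_ua⟩
  simp only [c, Finsupp.add_apply, orientedEdge_apply, h1, h2, h3, if_true, if_false, add_zero,
    Finsupp.coe_zero, Pi.zero_apply] at hc_ua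
  split_ifs at hc_ua <;> simp at hc_ua

theorem hNonzero_restrict_square {u a v b : V}
    (hua : {u, a} ∈ K.faces) (hva : {v, a} ∈ K.faces) (hub : {u, b} ∈ K.faces)
    (hvb : {v, b} ∈ K.faces) (huv : {u, v} ∉ K.faces) (hab : {a, b} ∉ K.faces) :
    HNonzero k (K.restrict ↑({u, a, v, b} : Finset V)) 2 := by
  set W : Finset V := {u, a, v, b}
  have edge : ∀ {x y : V}, {x, y} ∈ K.faces → {x, y} ⊆ W →
      {x, y} ∈ (K.restrict ↑W).faces :=
    fun hxy hW => ⟨hxy, coe_subset.mpr hW⟩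
  refine hNonzero_two_of_square (fun G ⟨⟨hGK, hGW⟩, hG⟩ => ?_)
    (by rintro rfl; exact huv (K.down_closed hua (by simp)))
    (by rintro rfl; exact hab (K.down_closed hua (by simp)))
    (by rintro rfl; exact huv (pair_comm v u ▸ hva))
    (by rintro rfl; exact huv hua)
    (by rintro rfl; exact huv hub)
    (by rintro rfl; exact huv (pair_comm v b ▸ hvb))
    (edge hua (by simp [W, insert_subset_iff]))
    (edge (pair_comm v a ▸ hva) (by simp [W, insert_subset_iff]))
    (edge hvb (by simp [W, insert_subset_iff]))
    (edge (pair_comm u b ▸ hub) (by simp [W, insert_subset_iff]))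
  have := card_le_two_of_subset_square hGK (coe_subset.mp hGW) huv hab
  omega

@[simp]
theorem link_empty : K.link ∅ = K := by
  cases K; simp [link]

theorem girth_le_card {F : Finset V} (hF : F ∈ K.faces) {W : Finset V} {p : ℕ}
    (h : HNonzero k ((K.link F).restrict W) p) : girth k K p ≤ W.card :=
  sInf_le ⟨W, ⟨F, hF, h⟩, rfl⟩

theorem Flag.mem_faces_of_pairwise (hK : K.Flag) {F : Finset V} (hF : F.Nonempty)
    (hpair : ∀ x ∈ F, ∀ y ∈ F, ({x, y} : Finset V) ∈ K.faces) : F ∈ K.faces := by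
  refine hK F fun G hGF hG => ?_
  obtain ⟨x, hx⟩ := hF
  have hxx : {x} ∈ K.faces := by simpa using hpair x hx x hx
  interval_cases hG' : G.card
  · exact K.down_closed hxx (by simp [card_eq_zero.mp hG'])
  · obtain ⟨y, rfl⟩ := card_eq_one.mp hG'
    simpa using hpair y (hGF (mem_singleton_self y)) y (hGF (mem_singleton_self y))
  · obtain ⟨y, z, -, rfl⟩ := card_eq_two.mp hG'
    exact hpair y (hGF (by simp)) z (hGF (by simp))

end SC

theorem common_neighbors_le_general {V : Type*} [LinearOrder V] (k : Type*) [Field k]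
    (K : SC V) (hflag : K.Flag) (d : ℕ)
    (hdim : ∀ F ∈ K.faces, F.card ≤ d)
    (hg : (4 : ℕ∞) < SC.girth k K 2)
    (u v : V) (hnadj : ({u, v} : Finset V) ∉ K.faces)
    (s : ℕ) (g : Fin s → V) (hinj : Function.Injective g)
    (hcn : ∀ i, g i ≠ u ∧ g i ≠ v ∧
      ({u, g i} : Finset V) ∈ K.faces ∧ ({v, g i} : Finset V) ∈ K.faces) :
    s ≤ d := by
  by_contra! hs
  obtain ⟨i, j, hij⟩ : ∃ i j, ({g i, g j} : Finset V) ∉ K.faces := by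
    by_contra! hclique
    have hface := hflag.mem_faces_of_pairwise (F := univ.image g) ⟨g ⟨0, by omega⟩, by simp⟩
      (by simpa using hclique)
    have := hdim _ hface
    rw [card_image_of_injective _ hinj, card_univ, Fintype.card_fin] at this
    omega
  have hsquare := SC.hNonzero_restrict_square (k := k) (hcn i).2.2.1 (hcn i).2.2.2
    (hcn j).2.2.1 (hcn j).2.2.2 hnadj hij
  have hempty : ∅ ∈ K.faces := K.down_closed (hcn i).2.2.1 (empty_subset _)
  have hgirth := SC.girth_le_card hempty (by rwa [SC.link_empty])
  exact hg.not_ge (hgirth.trans (by exact_mod_cast card_le_four))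

/-- If `K` is a flag complex of dimension `d-1` with
`gr_1(K) > 4`, then any two non-adjacent vertices have at most `d = dim K + 1`
common neighbors. -/
theorem common_neighbors_le {V : Type*} [LinearOrder V] (k : Type*) [Field k]
    (K : SC V) (hflag : K.Flag) (d : ℕ)
    (hdim : ∀ F ∈ K.faces, F.card ≤ d) (hdim' : ∃ F ∈ K.faces, F.card = d)
    (hg : (4 : ℕ∞) < SC.girth k K 2)
    (u v : V) (hne : u ≠ v) (hu : ({u} : Finset V) ∈ K.faces)
    (hv : ({v} : Finset V) ∈ K.faces) (hnadj : ({u, v} : Finset V) ∉ K.faces)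
    (s : ℕ) (g : Fin s → V) (hinj : Function.Injective g)
    (hcn : ∀ i, g i ≠ u ∧ g i ≠ v ∧
      ({u, g i} : Finset V) ∈ K.faces ∧ ({v, g i} : Finset V) ∈ K.faces) :
    s ≤ d :=
  common_neighbors_le_general k K hflag d hdim hg u v hnadj s g hinj hcn
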